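/- arXiv:1404.0065 — 4 statements merged into one kernel-verified Lean document; each statement's English description precedes it below -/
import Mathlib

section
/- Let 𝓛 be a finite family of linear subspaces of a finite-dimensional real vector space V, closed under pairwise sum. Then there is a unique function ρ : 𝓛 → ℝ such that the indicator function of ⋃_{L ∈ 𝓛} L^⊥ ⊆ V* equals ∑_{L ∈ 𝓛} ρ(L)·[L^⊥], where [·] denotes indicator functions and L^⊥ = {ξ ∈ V* : ξ|_L = 0}. -/
/-! By inclusion–exclusion, `[⋃_{L ∈ 𝓛} L^⊥]` is an integer combination of the indicators of the
intersections `⋂_{L ∈ t} L^⊥ = (⨆ t)^⊥` over nonempty `t ⊆ 𝓛`, and `⨆ t ∈ 𝓛` since `𝓛` is closed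
under sums. Uniqueness: indicators of distinct subspaces are linearly independent. Evaluate a
vanishing combination at a vector of a maximal subspace `P` with nonzero coefficient that avoids
every other such subspace; it exists because a vector space over an infinite field is not a finite
union of proper subspaces, and only the term of `P` survives. -/

open scoped Classical

namespace Subspace

variable {k E : Type*} [DivisionRing k] [Infinite k] [AddCommGroup E] [Module k E]

theorem exists_mem_notMem_of_not_le (W : Subspace k E) (s : Finset (Subspace k E))
    (h : ∀ p ∈ s, ¬W ≤ p) : ∃ x ∈ W, ∀ p ∈ s, x ∉ p := by
  by_contra! hcover
  have hW : ⋃ p ∈ s.image (Submodule.comap W.subtype), (p : Set W) = Set.univ := by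
    refine Set.eq_univ_of_forall fun x => ?_
    obtain ⟨p, hp, hxp⟩ := hcover x x.2
    exact Set.mem_biUnion (Finset.mem_image_of_mem _ hp) hxp
  obtain ⟨p, hp, htop⟩ := Finset.mem_image.1 (top_mem_of_biUnion_eq_univ hW)
  exact h p hp (Submodule.comap_subtype_eq_top.1 htop)

theorem linearIndependent_indicator (R : Type*) [Ring R] :
    LinearIndependent R fun p : Subspace k E => (p : Set E).indicator (1 : E → R) := by
  rw [linearIndependent_iff']
  intro s g hg
  by_contra! hne
  set S := s.filter (g · ≠ 0)
  obtain ⟨P, hP⟩ := S.exists_maximal <| by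
    obtain ⟨i, hi, hgi⟩ := hne
    exact ⟨i, Finset.mem_filter.2 ⟨hi, hgi⟩⟩
  obtain ⟨hPs, hgP⟩ := Finset.mem_filter.1 hP.1
  obtain ⟨x, hxP, hx⟩ := exists_mem_notMem_of_not_le P (S.erase P) fun Q hQ hPQ =>
    Finset.ne_of_mem_erase hQ (hP.eq_of_le (Finset.mem_of_mem_erase hQ) hPQ).symm
  have hgx := congrFun hg x
  rw [Finset.sum_apply, Finset.sum_eq_single_of_mem P hPs] at hgx
  · simp [hxP] at hgx
    exact hgP hgx
  · intro Q hQ hQP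
    by_cases hgQ : g Q = 0
    · simp [hgQ]
    · simp [hx Q (Finset.mem_erase.2 ⟨hQP, Finset.mem_filter.2 ⟨hQ, hgQ⟩⟩)]

end Subspace

theorem Set.indicator_biUnion_mem_span {α ι κ R : Type*} [Ring R] (s : Finset ι)
    (S : ι → Set α) (v : κ → Set α) (h : ∀ t ⊆ s, t.Nonempty → ∃ j, v j = ⋂ i ∈ t, S i) :
    (⋃ i ∈ s, S i).indicator 1 ∈
      Submodule.span R (Set.range fun j => (v j).indicator (1 : α → R)) := by
  have hincl : (⋃ i ∈ s, S i).indicator (1 : α → R) = ∑ t ∈ s.powerset with t.Nonempty,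
      (-1 : ℤ) ^ (t.card + 1) • (⋂ i ∈ t, S i).indicator 1 := by
    funext a
    rw [Finset.indicator_biUnion_eq_sum_powerset, Finset.sum_apply]
    rfl
  rw [hincl]
  refine Submodule.sum_mem _ fun t ht => ?_
  obtain ⟨hts, htne⟩ := Finset.mem_filter.1 ht
  obtain ⟨j, hj⟩ := h t (Finset.mem_powerset.1 hts) htne
  rw [← hj]
  exact Submodule.smul_of_tower_mem _ _ (Submodule.subset_span ⟨j, rfl⟩)

theorem Submodule.coe_dualAnnihilator_finsetSup {R M : Type*} [CommSemiring R] [AddCommMonoid M]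
    [Module R M] (t : Finset (Submodule R M)) :
    ((t.sup id).dualAnnihilator : Set (Module.Dual R M)) = ⋂ L ∈ t, (L.dualAnnihilator : Set _) := by
  simp [Finset.sup_eq_iSup, Submodule.dualAnnihilator_iSup_eq]

theorem LinearIndependent.existsUnique_sum_smul_eq {ι R M : Type*} [Fintype ι] [Semiring R]
    [AddCommMonoid M] [Module R M] {v : ι → M} (hv : LinearIndependent R v) {x : M}
    (hx : x ∈ Submodule.span R (Set.range v)) : ∃! c : ι → R, ∑ i, c i • v i = x :=
  let ⟨c, hc⟩ := (Submodule.mem_span_range_iff_exists_fun R).1 hx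
  ⟨c, hc, fun c' hc' => funext (Fintype.linearIndependent_iffₛ.1 hv c' c (hc'.trans hc.symm))⟩

theorem stmt_7_general {V : Type*} [AddCommGroup V] [Module ℝ V]
    (𝓛 : Finset (Submodule ℝ V))
    (hclosed : ∀ L₁ ∈ 𝓛, ∀ L₂ ∈ 𝓛, L₁ ⊔ L₂ ∈ 𝓛) :
    ∃! ρ : 𝓛 → ℝ, ∀ ξ : Module.Dual ℝ V,
      (if ξ ∈ ⋃ L ∈ 𝓛, ((Submodule.dualAnnihilator L : Submodule ℝ (Module.Dual ℝ V)) :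
            Set (Module.Dual ℝ V)) then (1:ℝ) else 0)
        = ∑ L : 𝓛, ρ L *
            (if ξ ∈ (L : Submodule ℝ V).dualAnnihilator then (1:ℝ) else 0) := by
  let v (L : 𝓛) : Set (Module.Dual ℝ V) := (L : Submodule ℝ V).dualAnnihilator
  have hspan := Set.indicator_biUnion_mem_span (R := ℝ) 𝓛 (fun L => (L.dualAnnihilator : Set _)) v
    fun t ht htne => ⟨⟨t.sup id, SupClosed.finsetSup_mem (fun _ h₁ _ h₂ => hclosed _ h₁ _ h₂) htne
      fun L hL => ht hL⟩, Submodule.coe_dualAnnihilator_finsetSup t⟩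
  have hindep : LinearIndependent ℝ fun L => (v L).indicator (1 : Module.Dual ℝ V → ℝ) :=
    (Subspace.linearIndependent_indicator ℝ).comp _ fun L M h =>
      Subtype.ext (Subspace.dualAnnihilator_inj.1 h)
  refine (existsUnique_congr fun ρ => ?_).1 (hindep.existsUnique_sum_smul_eq hspan)
  simp [funext_iff, eq_comm, v, Set.indicator_apply]

theorem stmt_7 {V : Type*} [AddCommGroup V] [Module ℝ V] [FiniteDimensional ℝ V]
    (𝓛 : Finset (Submodule ℝ V))
    (hclosed : ∀ L₁ ∈ 𝓛, ∀ L₂ ∈ 𝓛, L₁ ⊔ L₂ ∈ 𝓛) :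
    ∃! ρ : 𝓛 → ℝ, ∀ ξ : Module.Dual ℝ V,
      (if ξ ∈ ⋃ L ∈ 𝓛, ((Submodule.dualAnnihilator L : Submodule ℝ (Module.Dual ℝ V)) :
            Set (Module.Dual ℝ V)) then (1:ℝ) else 0)
        = ∑ L : 𝓛, ρ L *
            (if ξ ∈ (L : Submodule ℝ V).dualAnnihilator then (1:ℝ) else 0) :=
  stmt_7_general 𝓛 hclosed
end

section
/- Let v₁, …, v_d be a ℤ-basis of ℤ^d with dual basis η₁, …, η_d, let c = cone(v₁,…,v_d) and b = ∑_i [0,1)·v_i the semi-open fundamental cell. Then for every s ∈ ℝ^d, the set (s + c) ∩ ℤ^d equals the set of points ∑_i n_i v_i with n_i ∈ ℤ, n_i ≥ ⌈⟨η_i, s⟩⌉ for all i; consequently, for ξ with ⟨ξ, v_i⟩ < 0 for all i, ∑_{x ∈ (s+c) ∩ ℤ^d} e^{⟨ξ,x⟩} = e^{⟨ξ,s⟩} · ∏_{i=1}^d e^{{-⟨η_i,s⟩}⟨ξ,v_i⟩}/(1 - e^{⟨ξ,v_i⟩}). -/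
/-!
In the coordinates `x = ∑ ⟨ηᵢ, x⟩ vᵢ` the dual basis of a unimodular basis is integral (it is the
transposed inverse of an integer matrix of determinant `±1`), so the lattice points are exactly the
points with integer coordinates, and `x ∈ s + c` iff `⟨ηᵢ, x⟩ ≥ ⟨ηᵢ, s⟩` for all `i`. Hence the
lattice points of `s + c` form the product of the rays `nᵢ ≥ ⌈⟨ηᵢ, s⟩⌉`, the generating function
factors into `d` geometric series, and `⌈t⌉ = t + {-t}` puts the result in the stated form.
-/

open Matrix

theorem hasSum_prod_pi_of_nonneg {d : ℕ} {β : Fin d → Type*} {f : ∀ i, β i → ℝ} {a : Fin d → ℝ}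
    (hf0 : ∀ i, 0 ≤ f i) (hf : ∀ i, HasSum (f i) (a i)) :
    HasSum (fun b : ∀ i, β i => ∏ i, f i (b i)) (∏ i, a i) := by
  induction d with
  | zero => simp [hasSum_unique]
  | succ d ih =>
    have htail : HasSum (fun b : ∀ i : Fin d, β i.succ => ∏ i, f i.succ (b i))
        (∏ i : Fin d, a i.succ) :=
      ih (fun i => hf0 i.succ) (fun i => hf i.succ)
    have hsum := Summable.mul_of_nonneg (hf 0).summable htail.summable (hf0 0)
      fun b => Finset.prod_nonneg fun i _ => hf0 i.succ (b i)
    rw [Fin.prod_univ_succ, ← (Fin.consEquiv β).hasSum_iff]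
    simpa only [Function.comp_def, Fin.consEquiv_apply, Fin.prod_univ_succ, Fin.cons_zero,
      Fin.cons_succ] using (hf 0).mul htail hsum

theorem hasSum_exp_int_mul_of_le {a : ℝ} (ha : a < 0) (k : ℤ) :
    HasSum (fun n : {n : ℤ // k ≤ n} => Real.exp (n * a)) (Real.exp (k * a) / (1 - Real.exp a)) := by
  let e : ℕ ≃ {n : ℤ // k ≤ n} :=
    { toFun m := ⟨k + m, by omega⟩
      invFun n := (n.1 - k).toNat
      left_inv m := by simp
      right_inv n := Subtype.ext (by simp only; omega) }
  have he : (fun n : {n : ℤ // k ≤ n} => Real.exp (n * a)) ∘ e =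
      fun m : ℕ => Real.exp (k * a) * Real.exp a ^ m := by
    ext m
    simp [e, ← Real.exp_nat_mul, ← Real.exp_add, add_mul]
  rw [← e.hasSum_iff, he, div_eq_mul_inv]
  exact (hasSum_geometric_of_lt_one (Real.exp_pos a).le (Real.exp_lt_one_iff.mpr ha)).mul_left _

section DualBasis

variable {n : Type*} [Fintype n] [DecidableEq n] {w η : n → n → ℝ}

theorem dotProduct_sum_smul_of_dual (hdual : ∀ i j, η i ⬝ᵥ w j = if i = j then 1 else 0)
    (c : n → ℝ) (i : n) : η i ⬝ᵥ ∑ j, c j • w j = c i := by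
  simp [dotProduct_sum, dotProduct_smul, hdual]

theorem sum_dotProduct_smul_of_dual (hdual : ∀ i j, η i ⬝ᵥ w j = if i = j then 1 else 0)
    (x : n → ℝ) : ∑ i, (η i ⬝ᵥ x) • w i = x := by
  have hEW : of η * (of w)ᵀ = 1 := by
    ext i j
    rw [one_apply]
    exact hdual i j
  calc ∑ i, (η i ⬝ᵥ x) • w i = (of w)ᵀ *ᵥ (of η *ᵥ x) := by
        rw [mulVec_transpose, vecMul_eq_sum]; rfl
    _ = x := by rw [mulVec_mulVec, mul_eq_one_comm.mp hEW, one_mulVec]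

theorem dual_eq_intCast_inv_apply {v : n → n → ℤ} (hv : IsUnit (of v).det)
    (hdual : ∀ i j, η i ⬝ᵥ (fun l => (v j l : ℝ)) = if i = j then 1 else 0) (i l : n) :
    η i l = ((of v)⁻¹ l i : ℝ) := by
  let V := (of v).map (Int.castRingHom ℝ)
  have hEV : of η * Vᵀ = 1 := by
    ext i j
    rw [one_apply]
    exact hdual i j
  have hinv : (of v)⁻¹.map (Int.castRingHom ℝ) * V = 1 := by
    rw [← Matrix.map_mul, nonsing_inv_mul _ hv, Matrix.map_one _ (map_zero _) (map_one _)]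
  have := left_inv_eq_right_inv hEV (by rw [← transpose_mul, hinv, transpose_one])
  simpa using congrFun (congrFun this i) l

theorem dual_dotProduct_intCast {v : n → n → ℤ} (hv : IsUnit (of v).det)
    (hdual : ∀ i j, η i ⬝ᵥ (fun l => (v j l : ℝ)) = if i = j then 1 else 0) (m : n → ℤ) (i : n) :
    η i ⬝ᵥ (fun l => (m l : ℝ)) = ((m ᵥ* (of v)⁻¹) i : ℤ) := by
  simp [dotProduct, vecMul, dual_eq_intCast_inv_apply hv hdual, mul_comm]

theorem translate_cone_inter_lattice_eq {v : n → n → ℤ} (hv : IsUnit (of v).det)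
    (hdual : ∀ i j, η i ⬝ᵥ (fun l => (v j l : ℝ)) = if i = j then 1 else 0) (s : n → ℝ) :
    {x : n → ℝ | (∃ c : n → ℝ, (∀ i, 0 ≤ c i) ∧ x = s + ∑ i, c i • (fun l => (v i l : ℝ))) ∧
        ∀ l, ∃ m : ℤ, x l = (m : ℝ)} =
      {x : n → ℝ | ∃ m : n → ℤ, (∀ i, ⌈η i ⬝ᵥ s⌉ ≤ m i) ∧
        x = ∑ i, (m i : ℝ) • (fun l => (v i l : ℝ))} := by
  ext x
  constructor
  · rintro ⟨⟨c, hc, rfl⟩, hint⟩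
    choose m hm using hint
    have hx : s + ∑ i, c i • (fun l => (v i l : ℝ)) = fun l => (m l : ℝ) := funext hm
    refine ⟨m ᵥ* (of v)⁻¹, fun i => ?_, ?_⟩
    · rw [Int.ceil_le, ← dual_dotProduct_intCast hv hdual, ← hx, dotProduct_add,
        dotProduct_sum_smul_of_dual hdual]
      linarith [hc i]
    · conv_lhs => rw [← sum_dotProduct_smul_of_dual hdual (s + _), hx]
      simp only [dual_dotProduct_intCast hv hdual]
  · rintro ⟨m, hm, rfl⟩
    refine ⟨⟨fun i => m i - η i ⬝ᵥ s, fun i => sub_nonneg.2 (Int.ceil_le.1 (hm i)), ?_⟩,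
      fun l => ⟨∑ i, m i * v i l, by simp [Finset.sum_apply]⟩⟩
    simp only [sub_smul, Finset.sum_sub_distrib]
    rw [sum_dotProduct_smul_of_dual hdual s, add_sub_cancel]

end DualBasis

theorem hasSum_exp_translate_cone {d : ℕ} {w η : Fin d → Fin d → ℝ}
    (hdual : ∀ i j, η i ⬝ᵥ w j = if i = j then 1 else 0) {ξ : Fin d → ℝ}
    (hξ : ∀ i, ξ ⬝ᵥ w i < 0) (s : Fin d → ℝ) :
    HasSum (fun m : {m : Fin d → ℤ // ∀ i, ⌈η i ⬝ᵥ s⌉ ≤ m i} =>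
        Real.exp (ξ ⬝ᵥ ∑ i, (m.1 i : ℝ) • w i))
      (Real.exp (ξ ⬝ᵥ s) *
        ∏ i, Real.exp (Int.fract (-(η i ⬝ᵥ s)) * (ξ ⬝ᵥ w i)) / (1 - Real.exp (ξ ⬝ᵥ w i))) := by
  have hexp (c : Fin d → ℝ) :
      Real.exp (ξ ⬝ᵥ ∑ i, c i • w i) = ∏ i, Real.exp (c i * (ξ ⬝ᵥ w i)) := by
    simp only [dotProduct_sum, dotProduct_smul, smul_eq_mul, Real.exp_sum]
  have hceil (x : ℝ) : x + Int.fract (-x) = ⌈x⌉ := by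
    rw [Int.fract, Int.floor_neg]
    push_cast
    ring
  have hrhs : Real.exp (ξ ⬝ᵥ s) *
      ∏ i, Real.exp (Int.fract (-(η i ⬝ᵥ s)) * (ξ ⬝ᵥ w i)) / (1 - Real.exp (ξ ⬝ᵥ w i)) =
      ∏ i, Real.exp (⌈η i ⬝ᵥ s⌉ * (ξ ⬝ᵥ w i)) / (1 - Real.exp (ξ ⬝ᵥ w i)) := by
    conv_lhs => enter [1]; rw [← sum_dotProduct_smul_of_dual hdual s, hexp]
    rw [← Finset.prod_mul_distrib]
    refine Finset.prod_congr rfl fun i _ => ?_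
    rw [mul_div_assoc', ← Real.exp_add, ← add_mul, hceil]
  rw [hrhs, ← (Equiv.subtypePiEquivPi (p := fun i z => ⌈η i ⬝ᵥ s⌉ ≤ z)).symm.hasSum_iff]
  have hpi := hasSum_prod_pi_of_nonneg (f := fun i (z : {z : ℤ // ⌈η i ⬝ᵥ s⌉ ≤ z}) =>
    Real.exp (z * (ξ ⬝ᵥ w i))) (fun i _ => (Real.exp_pos _).le)
    fun i => hasSum_exp_int_mul_of_le (hξ i) ⌈η i ⬝ᵥ s⌉
  simp only [Function.comp_def, hexp]
  exact hpi

theorem stmt_14 (d : ℕ) (v : Fin d → Fin d → ℤ)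
    (hbasis : IsUnit (Matrix.det (Matrix.of fun i j => v i j)))
    (η : Fin d → Fin d → ℝ)
    (hdual : ∀ i j, (∑ l, η i l * (v j l : ℝ)) = if i = j then (1:ℝ) else 0)
    (s : Fin d → ℝ) :
    ({x : Fin d → ℝ |
        (∃ c : Fin d → ℝ, (∀ i, 0 ≤ c i) ∧
          x = s + ∑ i, c i • (fun l => (v i l : ℝ))) ∧
        ∀ l, ∃ m : ℤ, x l = (m : ℝ)}
      = {x : Fin d → ℝ | ∃ n : Fin d → ℤ,
          (∀ i, ⌈∑ l, η i l * s l⌉ ≤ n i) ∧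
          x = ∑ i, (n i : ℝ) • (fun l => (v i l : ℝ))}) ∧
    ∀ ξ : Fin d → ℝ, (∀ i, (∑ l, ξ l * (v i l : ℝ)) < 0) →
      HasSum
        (fun n : {n : Fin d → ℤ // ∀ i, ⌈∑ l, η i l * s l⌉ ≤ n i} =>
          Real.exp (∑ l, ξ l * (∑ i, (n.1 i : ℝ) * (v i l : ℝ))))
        (Real.exp (∑ l, ξ l * s l) *
          ∏ i, Real.exp (Int.fract (-(∑ l, η i l * s l)) * (∑ l, ξ l * (v i l : ℝ))) /
            (1 - Real.exp (∑ l, ξ l * (v i l : ℝ)))) := by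
  refine ⟨translate_cone_inter_lattice_eq hbasis hdual s, fun ξ hξ => ?_⟩
  have hcoord (m : Fin d → ℤ) : (∑ i, (m i : ℝ) • fun l => (v i l : ℝ)) =
      fun l => ∑ i, (m i : ℝ) * v i l := by
    ext l
    simp [Finset.sum_apply]
  have hgen := hasSum_exp_translate_cone hdual hξ s
  simp only [hcoord] at hgen
  exact hgen
end

section
/- Let c ⊂ V = ℝ^d be a full-dimensional simplicial cone with edge generators v₁,…,v_d and facets q₁,…,q_d with primitive outer normal vectors ν₁,…,ν_d. Then for every ξ ∈ V* with ⟨ξ, v_i⟩ < 0 for all i and every v ∈ V with ⟨ξ, v⟩ ≠ 0, the identity ∫_c e^{⟨ξ,x⟩} dx = (1/⟨ξ,v⟩) ∑_{j=1}^d ⟨ν_j, v⟩ ∫_{q_j} e^{⟨ξ,x⟩} dx holds, where the facet integrals are with respect to the Lebesgue measure normalized by the induced lattice. -/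
open MeasureTheory
open scoped Classical

/-! Both integrals are products of one-dimensional exponential integrals: in the coordinates
`x = ∑ tᵢ vᵢ` the cone integral is `|det v| ∏ᵢ (-⟨ξ,vᵢ⟩)⁻¹`, and the `j`-th facet integral
misses exactly the factor `(-⟨ξ,v_j⟩)⁻¹`. Writing `u = ∑ cᵢ vᵢ`, orthogonality of `ν_j` to the
other edges gives `⟨ν_j,u⟩ = c_j ⟨ν_j,v_j⟩`, so the `j`-th summand is `c_j ⟨ξ,v_j⟩` times the cone
integral, and these sum to `⟨ξ,u⟩` times it. -/

theorem Finset.sum_mul_sum_mul_comm {ι κ : Type*} (s : Finset ι) (r : Finset κ)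
    (x : κ → ℝ) (c : ι → ℝ) (w : ι → κ → ℝ) :
    ∑ l ∈ r, x l * ∑ i ∈ s, c i * w i l = ∑ i ∈ s, c i * ∑ l ∈ r, x l * w i l := by
  simp only [Finset.mul_sum, mul_left_comm (x _)]
  exact Finset.sum_comm

theorem integral_exp_sum_mul_orthant {ι : Type*} [Fintype ι] (a : ι → ℝ) (ha : ∀ i, a i < 0) :
    ∫ t in Set.univ.pi (fun _ : ι => Set.Ici (0:ℝ)), Real.exp (∑ i, t i * a i)
      = ∏ i, (-a i)⁻¹ := by
  rw [volume_pi, Measure.restrict_pi_pi]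
  simp only [Real.exp_sum]
  rw [integral_fintype_prod_eq_prod (fun i s => Real.exp (s * a i))]
  refine Finset.prod_congr rfl fun i _ => ?_
  simp only [integral_Ici_eq_integral_Ioi, mul_comm _ (a i), integral_exp_mul_Ioi (ha i),
    mul_zero, Real.exp_zero, neg_div, one_div, inv_neg]

theorem integral_exp_cone {ι κ : Type*} [Fintype ι] [Fintype κ] (ξ : κ → ℝ) (w : ι → κ → ℝ)
    (hw : ∀ i, ∑ l, ξ l * w i l < 0) :
    ∫ t in Set.univ.pi (fun _ : ι => Set.Ici (0:ℝ)), Real.exp (∑ l, ξ l * ∑ i, t i * w i l)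
      = ∏ i, (-∑ l, ξ l * w i l)⁻¹ := by
  simp only [Finset.sum_mul_sum_mul_comm _ _ ξ]
  exact integral_exp_sum_mul_orthant _ hw

theorem LinearIndependent.exists_sum_mul_eq {ι κ : Type*} [Fintype ι] [Fintype κ]
    {w : ι → κ → ℝ} (hw : LinearIndependent ℝ w) (hcard : Fintype.card ι = Fintype.card κ)
    (u : κ → ℝ) : ∃ c : ι → ℝ, u = fun l => ∑ i, c i * w i l := by
  have hspan := hw.span_eq_top_of_card_eq_finrank' (by rwa [Module.finrank_fintype_fun_eq_card])
  obtain ⟨c, hc⟩ :=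
    (Submodule.mem_span_range_iff_exists_fun ℝ).mp (hspan ▸ Submodule.mem_top (x := u))
  exact ⟨c, by ext l; simp [← hc, Finset.sum_apply]⟩

/-- The algebraic identity behind the formula, with `a i = ⟨ξ,vᵢ⟩`, `m j = ⟨ν_j,v_j⟩`,
`u = ∑ cᵢ vᵢ` and `D = |det v|`. -/
theorem brion_identity {ι : Type*} [Fintype ι] [DecidableEq ι] (a m c : ι → ℝ) (D : ℝ)
    (ha : ∀ i, a i ≠ 0) (hm : ∀ j, m j < 0) (hca : ∑ i, c i * a i ≠ 0) :
    D * ∏ i, (-a i)⁻¹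
      = (1 / ∑ i, c i * a i) * ∑ j, c j * m j * (D / |m j| * ∏ i : {i // i ≠ j}, (-a i.1)⁻¹) := by
  have hterm : ∀ j, c j * m j * (D / |m j| * ∏ i : {i // i ≠ j}, (-a i.1)⁻¹)
      = c j * a j * (D * ∏ i, (-a i)⁻¹) := by
    intro j
    rw [Fintype.prod_eq_mul_prod_subtype_ne _ j, abs_of_neg (hm j)]
    field_simp [ha j, (hm j).ne]
  rw [Finset.sum_congr rfl fun j _ => hterm j, ← Finset.sum_mul]
  field_simp

theorem stmt_17_general (d : ℕ) (v : Fin d → Fin d → ℤ)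
    (hind : LinearIndependent ℝ fun i => fun l => ((v i l : ℤ) : ℝ))
    (ν : Fin d → Fin d → ℤ)
    (hortho : ∀ j i, i ≠ j → (∑ l, (ν j l : ℝ) * (v i l : ℝ)) = 0)
    (houter : ∀ j, (∑ l, (ν j l : ℝ) * (v j l : ℝ)) < 0)
    (ξ : Fin d → ℝ) (hξ : ∀ i, (∑ l, ξ l * (v i l : ℝ)) < 0)
    (u : Fin d → ℝ) (hu : (∑ l, ξ l * u l) ≠ 0) :
    |Matrix.det (Matrix.of fun i l => ((v i l : ℤ) : ℝ))| *
        ∫ t in Set.univ.pi (fun _ : Fin d => Set.Ici (0:ℝ)),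
          Real.exp (∑ l, ξ l * (∑ i, t i * (v i l : ℝ)))
      = (1 / ∑ l, ξ l * u l) *
          ∑ j, (∑ l, (ν j l : ℝ) * u l) *
            ((|Matrix.det (Matrix.of fun i l => ((v i l : ℤ) : ℝ))| /
                |∑ l, (ν j l : ℝ) * (v j l : ℝ)|) *
              ∫ t : {i : Fin d // i ≠ j} → ℝ in
                  Set.univ.pi (fun _ : {i : Fin d // i ≠ j} => Set.Ici (0:ℝ)),
                Real.exp (∑ l, ξ l * (∑ i : {i : Fin d // i ≠ j}, t i * (v i.1 l : ℝ)))) := by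
  obtain ⟨c, rfl⟩ := hind.exists_sum_mul_eq rfl u
  have hcone := integral_exp_cone ξ (fun i l => (v i l : ℝ)) hξ
  have hfacet j := integral_exp_cone ξ (fun (i : {i // i ≠ j}) l => (v i.1 l : ℝ)) fun i => hξ i.1
  have hνu j : ∑ l, (ν j l : ℝ) * ∑ i, c i * v i l = c j * ∑ l, (ν j l : ℝ) * v j l := by
    rw [Finset.sum_mul_sum_mul_comm]
    exact Fintype.sum_eq_single j fun i hij => by rw [hortho j i hij, mul_zero]
  rw [Finset.sum_mul_sum_mul_comm] at hu ⊢
  simp only [hcone, hfacet, hνu]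
  exact brion_identity _ _ c _ (fun i => (hξ i).ne) houter hu

theorem stmt_17 (d : ℕ) (hd : 0 < d) (v : Fin d → Fin d → ℤ)
    (hind : LinearIndependent ℝ fun i => fun l => ((v i l : ℤ) : ℝ))
    (ν : Fin d → Fin d → ℤ)
    (hprim : ∀ j, Finset.univ.gcd (fun l => (ν j l).natAbs) = 1)
    (hortho : ∀ j i, i ≠ j → (∑ l, (ν j l : ℝ) * (v i l : ℝ)) = 0)
    (houter : ∀ j, (∑ l, (ν j l : ℝ) * (v j l : ℝ)) < 0)
    (ξ : Fin d → ℝ) (hξ : ∀ i, (∑ l, ξ l * (v i l : ℝ)) < 0)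
    (u : Fin d → ℝ) (hu : (∑ l, ξ l * u l) ≠ 0) :
    |Matrix.det (Matrix.of fun i l => ((v i l : ℤ) : ℝ))| *
        ∫ t in Set.univ.pi (fun _ : Fin d => Set.Ici (0:ℝ)),
          Real.exp (∑ l, ξ l * (∑ i, t i * (v i l : ℝ)))
      = (1 / ∑ l, ξ l * u l) *
          ∑ j, (∑ l, (ν j l : ℝ) * u l) *
            ((|Matrix.det (Matrix.of fun i l => ((v i l : ℤ) : ℝ))| /
                |∑ l, (ν j l : ℝ) * (v j l : ℝ)|) *
              ∫ t : {i : Fin d // i ≠ j} → ℝ in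
                  Set.univ.pi (fun _ : {i : Fin d // i ≠ j} => Set.Ici (0:ℝ)),
                Real.exp (∑ l, ξ l * (∑ i : {i : Fin d // i ≠ j}, t i * (v i.1 l : ℝ)))) :=
  stmt_17_general d v hind ν hortho houter ξ hξ u hu
end

section
/- Let v ∈ ℤ^d be a primitive lattice vector, let p : ℝ^d → ℝ^d/ℝv be the projection, and c ⊂ ℝ^d a rational simplicial full-dimensional cone with primitive edge generators v₁ = v, v₂, …, v_d. Then for ξ ∈ (ℝv)^⊥ ⊂ (ℝ^d)* and γ ∈ (ℤ^d)* with ⟨γ, v⟩ = 0, the restriction to v^⊥ of ⟨ξ', v⟩·I(c)(ξ' + 2πiγ) equals -I(p(c))(ξ + 2πiγ), where I(c)(η) = |det_{ℤ^d}(v₁,…,v_d)|·(-1)^d/∏_{j=1}^d ⟨η, v_j⟩ and I(p(c)) is computed with respect to the projected lattice p(ℤ^d); moreover if ⟨γ, v⟩ ≠ 0 the restriction is 0. -/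
open Filter Topology Finset

/- The function `⟨ξ', v_{j₀}⟩ · I(c)(ξ' + 2πiγ)` is `L · C / ∏ᵢ Fᵢ` with
`Fᵢ(ξ') = ⟨ξ' + 2πiγ, vᵢ⟩` and `L(ξ') = ⟨ξ', v_{j₀}⟩`. If `⟨γ, v_{j₀}⟩ = 0` then `F_{j₀} = L`, so
`L` cancels and what remains is continuous at `ξ`, with value `C / ∏_{i ≠ j₀} Fᵢ(ξ)`; the sign
`(-1)^d = -(-1)^(d-1)` gives the claimed residue. Otherwise `F_{j₀}(ξ) = 2πi⟨γ, v_{j₀}⟩ ≠ 0`, so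
the whole expression is continuous at `ξ`, where it vanishes because `L(ξ) = 0`. -/

section SimplePole

variable {X 𝕜 ι : Type*} [TopologicalSpace X] [Field 𝕜] [TopologicalSpace 𝕜] [ContinuousInv₀ 𝕜]
  [ContinuousMul 𝕜] [Fintype ι] {F : ι → X → 𝕜} {x : X} (c : 𝕜)

theorem tendsto_mul_div_prod_of_eq_factor [DecidableEq ι] {L : X → 𝕜} {l : Filter X} (j₀ : ι)
    (hl : l ≤ 𝓝 x) (hL : ∀ y, F j₀ y = L y) (hL0 : ∀ᶠ y in l, L y ≠ 0)
    (hF : ∀ i ∈ univ.erase j₀, ContinuousAt (F i) x) (hx : ∏ i ∈ univ.erase j₀, F i x ≠ 0) :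
    Tendsto (fun y => L y * (c / ∏ i, F i y)) l (𝓝 (c / ∏ i ∈ univ.erase j₀, F i x)) := by
  have hrest : Tendsto (fun y => c / ∏ i ∈ univ.erase j₀, F i y) l
      (𝓝 (c / ∏ i ∈ univ.erase j₀, F i x)) :=
    (tendsto_const_nhds.div (tendsto_finsetProd _ fun i hi => (hF i hi).tendsto) hx).mono_left hl
  refine hrest.congr' ?_
  filter_upwards [hL0] with y hy
  rw [← mul_prod_erase univ (F · y) (mem_univ j₀), hL, ← mul_div_assoc, mul_div_mul_left _ _ hy]

theorem tendsto_mul_div_prod_of_eq_zero {L : X → 𝕜} (hLc : ContinuousAt L x) (hLx : L x = 0)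
    (hF : ∀ i, ContinuousAt (F i) x) (hx : ∏ i, F i x ≠ 0) :
    Tendsto (fun y => L y * (c / ∏ i, F i y)) (𝓝 x) (𝓝 0) := by
  have h := hLc.tendsto.mul
    ((tendsto_const_nhds (x := c)).div (tendsto_finsetProd _ fun i _ => (hF i).tendsto) hx)
  rwa [hLx, zero_mul] at h

end SimplePole

theorem neg_one_pow_eq_neg_neg_one_pow_pred {R : Type*} [Monoid R] [HasDistribNeg R] {d : ℕ}
    (hd : 0 < d) : (-1 : R) ^ d = -(-1) ^ (d - 1) := by
  obtain ⟨e, rfl⟩ := Nat.exists_eq_add_one_of_ne_zero hd.ne'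
  rw [pow_succ, mul_neg_one, Nat.add_sub_cancel]

theorem stmt_19_general (d : ℕ) (hd : 0 < d) (j₀ : Fin d) (v : Fin d → Fin d → ℤ)
    (γ : Fin d → ℤ) (ξ : Fin d → ℝ)
    (hξv : (∑ l, ξ l * (v j₀ l : ℝ)) = 0)
    (hnz : ∀ i : Fin d, i ≠ j₀ →
      (((∑ l, ξ l * (v i l : ℝ)) : ℝ) : ℂ) +
        2 * Real.pi * Complex.I * ((∑ l, γ l * v i l : ℤ) : ℂ) ≠ 0) :
    ((∑ l, γ l * v j₀ l) = 0 →
      Filter.Tendsto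
        (fun ξ' : Fin d → ℝ =>
          (((∑ l, ξ' l * (v j₀ l : ℝ)) : ℝ) : ℂ) *
            (((|Matrix.det (Matrix.of fun i l => ((v i l : ℤ) : ℝ))| : ℝ) : ℂ) * (-1) ^ d /
              ∏ i, ((((∑ l, ξ' l * (v i l : ℝ)) : ℝ) : ℂ) +
                2 * Real.pi * Complex.I * ((∑ l, γ l * v i l : ℤ) : ℂ))))
        (nhdsWithin ξ {ξ' : Fin d → ℝ | ∀ i,
          (((∑ l, ξ' l * (v i l : ℝ)) : ℝ) : ℂ) +
            2 * Real.pi * Complex.I * ((∑ l, γ l * v i l : ℤ) : ℂ) ≠ 0})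
        (nhds (-(((|Matrix.det (Matrix.of fun i l => ((v i l : ℤ) : ℝ))| : ℝ) : ℂ) *
            (-1) ^ (d - 1) /
          ∏ i ∈ Finset.univ.erase j₀,
            ((((∑ l, ξ l * (v i l : ℝ)) : ℝ) : ℂ) +
              2 * Real.pi * Complex.I * ((∑ l, γ l * v i l : ℤ) : ℂ)))))) ∧
    ((∑ l, γ l * v j₀ l) ≠ 0 →
      Filter.Tendsto
        (fun ξ' : Fin d → ℝ =>
          (((∑ l, ξ' l * (v j₀ l : ℝ)) : ℝ) : ℂ) *
            (((|Matrix.det (Matrix.of fun i l => ((v i l : ℤ) : ℝ))| : ℝ) : ℂ) * (-1) ^ d /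
              ∏ i, ((((∑ l, ξ' l * (v i l : ℝ)) : ℝ) : ℂ) +
                2 * Real.pi * Complex.I * ((∑ l, γ l * v i l : ℤ) : ℂ))))
        (nhdsWithin ξ {ξ' : Fin d → ℝ | ∀ i,
          (((∑ l, ξ' l * (v i l : ℝ)) : ℝ) : ℂ) +
            2 * Real.pi * Complex.I * ((∑ l, γ l * v i l : ℤ) : ℂ) ≠ 0})
        (nhds 0)) := by
  let F : Fin d → (Fin d → ℝ) → ℂ := fun i ξ' => (((∑ l, ξ' l * (v i l : ℝ)) : ℝ) : ℂ) +
      2 * Real.pi * Complex.I * ((∑ l, γ l * v i l : ℤ) : ℂ)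
  let L : (Fin d → ℝ) → ℂ := fun ξ' => (((∑ l, ξ' l * (v j₀ l : ℝ)) : ℝ) : ℂ)
  have hF : ∀ i, Continuous (F i) := fun _ => by fun_prop
  have hL : Continuous L := by fun_prop
  constructor
  · intro hγ
    have hsign : ∀ a b : ℂ, -(a * (-1) ^ (d - 1) / b) = a * (-1) ^ d / b := fun a b => by
      rw [neg_one_pow_eq_neg_neg_one_pow_pred hd]; ring
    rw [hsign]
    have hFL : ∀ ξ', F j₀ ξ' = L ξ' := fun ξ' => by
      simp only [F, L, hγ, Int.cast_zero, mul_zero, add_zero]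
    refine tendsto_mul_div_prod_of_eq_factor (F := F) _ j₀ nhdsWithin_le_nhds hFL ?_
      (fun i _ => (hF i).continuousAt) (prod_ne_zero_iff.2 fun i hi => hnz i (ne_of_mem_erase hi))
    filter_upwards [self_mem_nhdsWithin] with ξ' hξ'
    exact fun h => hξ' j₀ ((hFL ξ').trans h)
  · intro hγ
    have hLξ : L ξ = 0 := by simp only [L, hξv, Complex.ofReal_zero]
    have hFj₀ : F j₀ ξ ≠ 0 := by
      simp only [F, hξv, Complex.ofReal_zero, zero_add]
      exact mul_ne_zero (mul_ne_zero (mul_ne_zero two_ne_zero (mod_cast Real.pi_ne_zero))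
        Complex.I_ne_zero) (mod_cast hγ)
    have hprod : ∏ i, F i ξ ≠ 0 := prod_ne_zero_iff.2 fun i _ =>
      if hi : i = j₀ then hi ▸ hFj₀ else hnz i hi
    exact (tendsto_mul_div_prod_of_eq_zero _ hL.continuousAt hLξ (fun i => (hF i).continuousAt)
      hprod).mono_left nhdsWithin_le_nhds

theorem stmt_19 (d : ℕ) (hd : 0 < d) (j₀ : Fin d) (v : Fin d → Fin d → ℤ)
    (hprim : Finset.univ.gcd (fun l => (v j₀ l).natAbs) = 1)
    (hind : LinearIndependent ℝ fun i => fun l => ((v i l : ℤ) : ℝ))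
    (γ : Fin d → ℤ) (ξ : Fin d → ℝ)
    (hξv : (∑ l, ξ l * (v j₀ l : ℝ)) = 0)
    (hnz : ∀ i : Fin d, i ≠ j₀ →
      (((∑ l, ξ l * (v i l : ℝ)) : ℝ) : ℂ) +
        2 * Real.pi * Complex.I * ((∑ l, γ l * v i l : ℤ) : ℂ) ≠ 0) :
    ((∑ l, γ l * v j₀ l) = 0 →
      Filter.Tendsto
        (fun ξ' : Fin d → ℝ =>
          (((∑ l, ξ' l * (v j₀ l : ℝ)) : ℝ) : ℂ) *
            (((|Matrix.det (Matrix.of fun i l => ((v i l : ℤ) : ℝ))| : ℝ) : ℂ) * (-1) ^ d /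
              ∏ i, ((((∑ l, ξ' l * (v i l : ℝ)) : ℝ) : ℂ) +
                2 * Real.pi * Complex.I * ((∑ l, γ l * v i l : ℤ) : ℂ))))
        (nhdsWithin ξ {ξ' : Fin d → ℝ | ∀ i,
          (((∑ l, ξ' l * (v i l : ℝ)) : ℝ) : ℂ) +
            2 * Real.pi * Complex.I * ((∑ l, γ l * v i l : ℤ) : ℂ) ≠ 0})
        (nhds (-(((|Matrix.det (Matrix.of fun i l => ((v i l : ℤ) : ℝ))| : ℝ) : ℂ) *
            (-1) ^ (d - 1) /
          ∏ i ∈ Finset.univ.erase j₀,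
            ((((∑ l, ξ l * (v i l : ℝ)) : ℝ) : ℂ) +
              2 * Real.pi * Complex.I * ((∑ l, γ l * v i l : ℤ) : ℂ)))))) ∧
    ((∑ l, γ l * v j₀ l) ≠ 0 →
      Filter.Tendsto
        (fun ξ' : Fin d → ℝ =>
          (((∑ l, ξ' l * (v j₀ l : ℝ)) : ℝ) : ℂ) *
            (((|Matrix.det (Matrix.of fun i l => ((v i l : ℤ) : ℝ))| : ℝ) : ℂ) * (-1) ^ d /
              ∏ i, ((((∑ l, ξ' l * (v i l : ℝ)) : ℝ) : ℂ) +
                2 * Real.pi * Complex.I * ((∑ l, γ l * v i l : ℤ) : ℂ))))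
        (nhdsWithin ξ {ξ' : Fin d → ℝ | ∀ i,
          (((∑ l, ξ' l * (v i l : ℝ)) : ℝ) : ℂ) +
            2 * Real.pi * Complex.I * ((∑ l, γ l * v i l : ℤ) : ℂ) ≠ 0})
        (nhds 0)) :=
  stmt_19_general d hd j₀ v γ ξ hξv hnz
end
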